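/- Let $(X,r)$ be a set-theoretic solution to the Yang–Baxter equation, let $(F,\Phi,\Psi)$ be a Drinfeld twist for $r$, and let $(G,\phi,\psi)$ be a Drinfeld twist for $r^F := FrF^{-1}$. Then $(GF,\; F_{23}^{-1}\phi F_{23}\Phi,\; F_{12}^{-1}\psi F_{12}\Psi)$ is a Drinfeld twist for $r$, and $r^{GF} = (r^F)^G$. -/
import Mathlib


/-- Application of a map `s : X² → X²` on the first two factors of `X³`. -/
def d12 {X : Type*} (s : X × X → X × X) : X × X × X → X × X × X :=
  fun p => ((s (p.1, p.2.1)).1, (s (p.1, p.2.1)).2, p.2.2)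

/-- Application of a map `s : X² → X²` on the last two factors of `X³`. -/
def d23 {X : Type*} (s : X × X → X × X) : X × X × X → X × X × X :=
  fun p => (p.1, s p.2)

/-- Set-theoretic Yang–Baxter equation. -/
def YBE {X : Type*} (r : X × X → X × X) : Prop :=
  d12 r ∘ d23 r ∘ d12 r = d23 r ∘ d12 r ∘ d23 r

/-- `(F, Φ, Ψ)` is a Drinfeld twist for `r`. -/
def IsDrinfeldTwist {X : Type*} (r : X × X → X × X) (F : X × X ≃ X × X)
    (Φ Ψ : (X × X × X) ≃ (X × X × X)) : Prop :=
  d12 ⇑F ∘ ⇑Ψ = d23 ⇑F ∘ ⇑Φ ∧ ⇑Ψ ∘ d12 r = d12 r ∘ ⇑Ψ ∧ ⇑Φ ∘ d23 r = d23 r ∘ ⇑Φ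

/-- The twisted map `r^F = F r F⁻¹`. -/
def twist {X : Type*} (r : X × X → X × X) (F : X × X ≃ X × X) : X × X → X × X :=
  ⇑F ∘ r ∘ ⇑F.symm

/-- `F` applied on the first two factors of `X³`, as an equivalence. -/
def e12 {X : Type*} (F : X × X ≃ X × X) : (X × X × X) ≃ (X × X × X) :=
  (Equiv.prodAssoc X X X).symm.trans ((F.prodCongr (Equiv.refl X)).trans (Equiv.prodAssoc X X X))

/-- `F` applied on the last two factors of `X³`, as an equivalence. -/
def e23 {X : Type*} (F : X × X ≃ X × X) : (X × X × X) ≃ (X × X × X) :=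
  (Equiv.refl X).prodCongr F


lemma e12_coe {X : Type*} (F : X × X ≃ X × X) : ⇑(e12 F) = d12 ⇑F := rfl
lemma e12_symm_coe {X : Type*} (F : X × X ≃ X × X) : ⇑(e12 F).symm = d12 ⇑F.symm := rfl
lemma e23_coe {X : Type*} (F : X × X ≃ X × X) : ⇑(e23 F) = d23 ⇑F := rfl
lemma e23_symm_coe {X : Type*} (F : X × X ≃ X × X) : ⇑(e23 F).symm = d23 ⇑F.symm := rfl
lemma d12_comp {X : Type*} (f g : X × X → X × X) : d12 (f ∘ g) = d12 f ∘ d12 g := rfl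
lemma d23_comp {X : Type*} (f g : X × X → X × X) : d23 (f ∘ g) = d23 f ∘ d23 g := rfl
lemma d12_cancel {X : Type*} (F : X × X ≃ X × X) (p : X × X × X) :
    d12 ⇑F (d12 ⇑F.symm p) = p := by simp [d12]
lemma d12_cancel' {X : Type*} (F : X × X ≃ X × X) (p : X × X × X) :
    d12 ⇑F.symm (d12 ⇑F p) = p := by simp [d12]
lemma d23_cancel {X : Type*} (F : X × X ≃ X × X) (p : X × X × X) :
    d23 ⇑F (d23 ⇑F.symm p) = p := by simp [d23]
lemma d23_cancel' {X : Type*} (F : X × X ≃ X × X) (p : X × X × X) :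
    d23 ⇑F.symm (d23 ⇑F p) = p := by simp [d23]

theorem stmt1 {X : Type*} (r : X × X → X × X) (hr : YBE r)
    (F : X × X ≃ X × X) (Φ Ψ : (X × X × X) ≃ (X × X × X))
    (h1 : IsDrinfeldTwist r F Φ Ψ)
    (G : X × X ≃ X × X) (φ ψ : (X × X × X) ≃ (X × X × X))
    (h2 : IsDrinfeldTwist (twist r F) G φ ψ) :
    IsDrinfeldTwist r (F.trans G)
      (Φ.trans ((e23 F).trans (φ.trans (e23 F).symm)))
      (Ψ.trans ((e12 F).trans (ψ.trans (e12 F).symm)))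
    ∧ twist r (F.trans G) = twist (twist r F) G := by

  obtain ⟨ha, hb, hc⟩ := h1
  obtain ⟨ga, gb, gc⟩ := h2
  have ha' : ∀ p, d12 ⇑F (Ψ p) = d23 ⇑F (Φ p) := fun p => congrFun ha p
  have ga' : ∀ p, d12 ⇑G (ψ p) = d23 ⇑G (φ p) := fun p => congrFun ga p
  have hb' : ∀ p, Ψ (d12 r p) = d12 r (Ψ p) := fun p => congrFun hb p
  have hc' : ∀ p, Φ (d23 r p) = d23 r (Φ p) := fun p => congrFun hc p
  have gb' : ∀ q, ψ (d12 ⇑F (d12 r (d12 ⇑F.symm q)))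
      = d12 ⇑F (d12 r (d12 ⇑F.symm (ψ q))) := fun q => congrFun gb q
  have gc' : ∀ q, φ (d23 ⇑F (d23 r (d23 ⇑F.symm q)))
      = d23 ⇑F (d23 r (d23 ⇑F.symm (φ q))) := fun q => congrFun gc q
  refine ⟨⟨?_, ?_, ?_⟩, ?_⟩
  · funext p
    simp only [Function.comp_apply, Equiv.coe_trans, Equiv.trans_apply, d12_comp,
      d23_comp, e12_coe, e12_symm_coe, e23_coe, e23_symm_coe]
    rw [d12_cancel, d23_cancel, ha', ga']
  · funext p
    simp only [Function.comp_apply, Equiv.coe_trans, Equiv.trans_apply,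
      e12_coe, e12_symm_coe]
    rw [hb' p]
    have key := gb' (d12 ⇑F (Ψ p))
    rw [d12_cancel'] at key
    rw [key, d12_cancel']
  · funext p
    simp only [Function.comp_apply, Equiv.coe_trans, Equiv.trans_apply,
      e23_coe, e23_symm_coe]
    rw [hc' p]
    have key := gc' (d23 ⇑F (Φ p))
    rw [d23_cancel'] at key
    rw [key, d23_cancel']
  · funext p
    simp [twist]
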